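/- Let ζ = exp(2πi/9) ∈ ℂ. There do not exist natural numbers f₁, f₂, f₄, f₅, f₇, f₈ such that 1 + ζ + ζ² + ζ⁴ = 1 + ∑_{u ∈ {1,2,4,5,7,8}} f_u · ζ^u/(1 − ζ^u). -/

import Mathlib

/-!
Taking real parts kills the unknowns: a point `z ≠ 1` of the unit circle has
`Re (z / (1 - z)) = -1/2`, and `Re (ζ + ζ² + ζ⁴) = 0` because `ζ, ζ², ζ⁴` and their conjugates
`ζ⁸, ζ⁷, ζ⁵` are the primitive ninth roots of unity, whose sum is `0`. So the real part of the
equation reads `1 = 1 - (∑ f_u) / 2`, forcing every `f_u = 0`, and then `ζ + ζ² + ζ⁴ = 0`,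
which is absurd since its imaginary part `sin (2π/9) + sin (4π/9) + sin (8π/9)` is positive.
-/

open Complex ComplexConjugate

theorem div_one_sub_add_div_one_sub_of_mul_eq_one {K : Type*} [Field K] {a b : K}
    (hab : a * b = 1) (ha : a ≠ 1) (hb : b ≠ 1) : a / (1 - a) + b / (1 - b) = -1 := by
  have ha' : (1 : K) - a ≠ 0 := sub_ne_zero.2 ha.symm
  have hb' : (1 : K) - b ≠ 0 := sub_ne_zero.2 hb.symm
  field_simp
  linear_combination -hab

theorem Complex.re_div_one_sub_of_norm_eq_one {z : ℂ} (hz : ‖z‖ = 1) (h1 : z ≠ 1) :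
    (z / (1 - z)).re = -1 / 2 := by
  have hz0 : z ≠ 0 := by rintro rfl; simp at hz
  have hmul : z * conj z = 1 := by rw [← inv_eq_conj hz, mul_inv_cancel₀ hz0]
  have hconj1 : conj z ≠ 1 := by rwa [Ne, map_eq_one_iff _ (RingHom.injective _)]
  have hpair := div_one_sub_add_div_one_sub_of_mul_eq_one hmul h1 hconj1
  apply ofReal_injective
  rw [re_eq_add_conj, map_div₀, map_sub, map_one, hpair]
  norm_num

theorem IsPrimitiveRoot.re_pow_div_one_sub_pow {ζ : ℂ} {n k : ℕ} (hζ : IsPrimitiveRoot ζ n)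
    (hk : 0 < k) (hkn : k < n) : (ζ ^ k / (1 - ζ ^ k)).re = -1 / 2 :=
  re_div_one_sub_of_norm_eq_one (by rw [norm_pow, hζ.norm'_eq_one (by omega), one_pow])
    (hζ.pow_ne_one_of_pos_of_lt hk.ne' hkn)

theorem IsPrimitiveRoot.re_add_sq_add_pow_four {ζ : ℂ} (hζ : IsPrimitiveRoot ζ 9) :
    (ζ + ζ ^ 2 + ζ ^ 4).re = 0 := by
  have hconj : conj ζ = ζ ^ 8 := by
    rw [← inv_eq_conj (hζ.norm'_eq_one (by norm_num))]
    exact inv_eq_of_mul_eq_one_right (by rw [← pow_succ', hζ.pow_eq_one])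
  have h9 := hζ.pow_eq_one
  have hsum9 := hζ.geom_sum_eq_zero (by norm_num)
  have hsum3 := (hζ.pow_of_dvd (p := 3) (by norm_num) (by norm_num)).geom_sum_eq_zero
    (by norm_num)
  simp only [Finset.sum_range_succ, Finset.sum_range_zero] at hsum9 hsum3
  apply ofReal_injective
  rw [re_eq_add_conj, ofReal_zero]
  simp only [map_add, map_pow, hconj]
  -- the conjugates `(ζ⁸)² = ζ⁷ ζ⁹` and `(ζ⁸)⁴ = ζ⁵ ζ²⁷` reduce to `ζ⁷` and `ζ⁵`
  linear_combination (hsum9 - hsum3 + (ζ ^ 7 + ζ ^ 23 + ζ ^ 14 + ζ ^ 5) * h9) / 2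

theorem Complex.im_exp_two_pi_I_div_pow_pos {n k : ℕ} (hk : 0 < k) (hkn : 2 * k < n) :
    0 < (exp (2 * Real.pi * I / n) ^ k).im := by
  have hn : (0 : ℝ) < n := by exact_mod_cast (show 0 < n by omega)
  rw [← exp_nat_mul, show (k : ℂ) * (2 * Real.pi * I / n) = ((2 * Real.pi * k / n : ℝ) : ℂ) * I by
    push_cast; ring, exp_ofReal_mul_I_im]
  have hkn' : (2 * k : ℝ) < n := by exact_mod_cast hkn
  apply Real.sin_pos_of_pos_of_lt_pi
  · positivity
  · rw [div_lt_iff₀ hn]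
    nlinarith [Real.pi_pos]

theorem no_eichler_solution_order_nine :
    ¬ ∃ f₁ f₂ f₄ f₅ f₇ f₈ : ℕ,
      letI ζ : ℂ := Complex.exp (2 * Real.pi * Complex.I / 9)
      (1 + ζ + ζ ^ 2 + ζ ^ 4 : ℂ) =
        1 + (f₁ : ℂ) * (ζ / (1 - ζ)) + (f₂ : ℂ) * (ζ ^ 2 / (1 - ζ ^ 2))
          + (f₄ : ℂ) * (ζ ^ 4 / (1 - ζ ^ 4)) + (f₅ : ℂ) * (ζ ^ 5 / (1 - ζ ^ 5))
          + (f₇ : ℂ) * (ζ ^ 7 / (1 - ζ ^ 7)) + (f₈ : ℂ) * (ζ ^ 8 / (1 - ζ ^ 8)) := by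
  rintro ⟨f₁, f₂, f₄, f₅, f₇, f₈, h⟩
  set ζ : ℂ := exp (2 * Real.pi * I / 9)
  have hζ : IsPrimitiveRoot ζ 9 := isPrimitiveRoot_exp 9 (by norm_num)
  have hre := congrArg re h
  have hre_sum := hζ.re_add_sq_add_pow_four
  simp only [add_re, one_re, mul_re, natCast_re, natCast_im, zero_mul, sub_zero] at hre hre_sum
  have hfrac (k : ℕ) (hk : 0 < k) (hk9 : k < 9) : (ζ ^ k / (1 - ζ ^ k)).re = -1 / 2 :=
    hζ.re_pow_div_one_sub_pow hk hk9
  have hfrac1 : (ζ / (1 - ζ)).re = -1 / 2 := by simpa using hfrac 1 (by norm_num) (by norm_num)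
  rw [hfrac1, hfrac 2 (by norm_num) (by norm_num), hfrac 4 (by norm_num) (by norm_num),
    hfrac 5 (by norm_num) (by norm_num), hfrac 7 (by norm_num) (by norm_num),
    hfrac 8 (by norm_num) (by norm_num)] at hre
  obtain ⟨rfl, rfl, rfl, rfl, rfl, rfl⟩ :
      f₁ = 0 ∧ f₂ = 0 ∧ f₄ = 0 ∧ f₅ = 0 ∧ f₇ = 0 ∧ f₈ = 0 := by
    have hsum : ((f₁ + f₂ + f₄ + f₅ + f₇ + f₈ : ℕ) : ℝ) = 0 := by push_cast; linarith
    have := Nat.cast_eq_zero.1 hsum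
    omega
  have hzero : ζ + ζ ^ 2 + ζ ^ 4 = 0 := by
    simp only [Nat.cast_zero, zero_mul, add_zero] at h
    linear_combination h
  have him_pos (k : ℕ) (hk : 0 < k) (hk9 : 2 * k < 9) : 0 < (ζ ^ k).im :=
    im_exp_two_pi_I_div_pow_pos (n := 9) hk hk9
  have him := congrArg im hzero
  simp only [add_im, zero_im] at him
  linarith [pow_one ζ ▸ him_pos 1 one_pos (by norm_num), him_pos 2 two_pos (by norm_num),
    him_pos 4 (by norm_num) (by norm_num)]
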